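/- Let n ≥ 1. Every complex unitary matrix U whose rows and columns are indexed by length-n binary strings (equivalently, by functions Fin n → Bool) can be written as a product of at most 2^{n−1}(2^n − 1) two-level unitary matrices, each of which agrees with the identity in every entry outside the 2×2 principal submatrix indexed by a pair of binary strings x, y that differ in exactly one coordinate. Moreover, the pairs {x,y} occurring can all be taken from a fixed set of 2^n − 1 pairs (the consecutive pairs of a fixed Gray code), so the factors are fully controlled single-qubit gates drawn from 2^n − 1 classes. -/

import Mathlib

def DiffersInOnePos {n : ℕ} (x y : Fin n → Bool) : Prop :=
  (Finset.univ.filter fun j => x j ≠ y j).card = 1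

def IsTwoLevelOn {ι R : Type*} [DecidableEq ι] [Zero R] [One R]
    (A : Matrix ι ι R) (p q : ι) : Prop :=
  ∀ i j, (i ≠ p ∧ i ≠ q) ∨ (j ≠ p ∧ j ≠ q) → A i j = if i = j then 1 else 0

/-!
List the binary strings along the reflected Gray code `X₁, …, X_N` (`N = 2ⁿ`), in which
consecutive strings differ in one bit, and run Givens elimination in that order. Rotations on
the rows `(X_{N-1}, X_N), …, (X₁, X₂)` move the first column of `U` into the entry `X₁`, where it
becomes a nonnegative real number, hence `1` by unitarity; then the first row is that of the
identity too, and one recurses on `X₂, …, X_N`. The last `2 × 2` block is itself a factor, so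
there are `(N - 1) + ⋯ + 1 = N(N - 1)/2` factors, each supported on a pair `(X_k, X_{k+1})`.
-/

namespace List

variable {α : Type*} {l : List α}

theorem mem_of_mem_consecutivePairs {p : α × α} (hp : p ∈ l.consecutivePairs) :
    p.1 ∈ l ∧ p.2 ∈ l :=
  (of_mem_zip hp).imp_right mem_of_mem_tail

theorem length_consecutivePairs : l.consecutivePairs.length = l.length - 1 := by
  simp

theorem Nodup.consecutivePairs (hl : l.Nodup) : l.consecutivePairs.Nodup := by
  induction l with
  | nil => simp
  | cons a l ih =>
    cases l with
    | nil => exact nodup_nil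
    | cons b l =>
      exact nodup_cons.2 ⟨fun h => (nodup_cons.1 hl).1 (mem_of_mem_consecutivePairs h).1,
        ih hl.of_cons⟩

theorem IsChain.rel_of_mem_consecutivePairs {R : α → α → Prop} (hl : l.IsChain R) {p : α × α}
    (hp : p ∈ l.consecutivePairs) : R p.1 p.2 := by
  induction hl with
  | nil => simp at hp
  | singleton => cases hp
  | cons_cons hab _ ih =>
    rcases mem_cons.1 hp with rfl | hp
    · exact hab
    · exact ih hp

end List

open Matrix ComplexConjugate

namespace Matrix

variable {ι R : Type*} [DecidableEq ι]

section IdentityOutside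

variable [Fintype ι] [Semiring R]

theorem mul_apply_of_row_eq_one {A : Matrix ι ι R} {i : ι}
    (hA : ∀ k, A i k = (1 : Matrix ι ι R) i k) (M : Matrix ι ι R) (j : ι) :
    (A * M) i j = M i j := by
  rw [mul_apply, Finset.sum_congr rfl fun k _ => by rw [hA k], ← mul_apply, one_mul]

theorem mul_apply_of_col_eq_one {B : Matrix ι ι R} {j : ι}
    (hB : ∀ k, B k j = (1 : Matrix ι ι R) k j) (M : Matrix ι ι R) (i : ι) :
    (M * B) i j = M i j := by
  rw [mul_apply, Finset.sum_congr rfl fun k _ => by rw [hB k], ← mul_apply, mul_one]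

def identityOutside (s : Set ι) : Submonoid (Matrix ι ι R) where
  carrier := {A | ∀ i j, i ∉ s ∨ j ∉ s → A i j = (1 : Matrix ι ι R) i j}
  one_mem' _ _ _ := rfl
  mul_mem' {A B} hA hB i j := by
    rintro (hi | hj)
    · rw [mul_apply_of_row_eq_one (fun k => hA i k (.inl hi)), hB i j (.inl hi)]
    · rw [mul_apply_of_col_eq_one (fun k => hB k j (.inr hj)), hA i j (.inr hj)]

theorem mem_identityOutside {s : Set ι} {A : Matrix ι ι R} :
    A ∈ identityOutside s ↔ ∀ i j, i ∉ s ∨ j ∉ s → A i j = (1 : Matrix ι ι R) i j :=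
  Iff.rfl

theorem identityOutside_mono {s t : Set ι} (hst : s ⊆ t) :
    identityOutside (R := R) s ≤ identityOutside t :=
  fun _ hA i j hij => hA i j (hij.imp (mt (@hst i)) (mt (@hst j)))

theorem star_mem_identityOutside [StarRing R] {s : Set ι} {A : Matrix ι ι R}
    (hA : A ∈ identityOutside s) : star A ∈ identityOutside s := fun i j hij => by
  rw [star_apply, hA j i hij.symm, ← star_apply, star_one]

end IdentityOutside

section TwoLevel

variable [Semiring R] {p q : ι}

def twoLevel (p q : ι) (V : Matrix (Fin 2) (Fin 2) R) : Matrix ι ι R :=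
  of fun i j =>
    if i = p then (if j = p then V 0 0 else if j = q then V 0 1 else 0)
    else if i = q then (if j = p then V 1 0 else if j = q then V 1 1 else 0)
    else (1 : Matrix ι ι R) i j

theorem isTwoLevelOn_twoLevel (V : Matrix (Fin 2) (Fin 2) R) :
    IsTwoLevelOn (twoLevel p q V) p q := by
  intro i j _
  simp only [twoLevel, of_apply, one_apply]
  split_ifs <;> grind

theorem twoLevel_one (hpq : p ≠ q) : twoLevel p q (1 : Matrix (Fin 2) (Fin 2) R) = 1 := by
  ext i j
  simp only [twoLevel, of_apply, one_apply]
  split_ifs <;> grind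

theorem star_twoLevel [StarRing R] (V : Matrix (Fin 2) (Fin 2) R) :
    star (twoLevel p q V) = twoLevel p q (star V) := by
  ext i j
  simp only [twoLevel, star_apply, of_apply, one_apply]
  split_ifs <;> grind [star_zero, star_one]

variable [Fintype ι]

theorem twoLevel_mul_apply (hpq : p ≠ q) (V : Matrix (Fin 2) (Fin 2) R) (M : Matrix ι ι R)
    (i j : ι) :
    (twoLevel p q V * M) i j =
      if i = p then V 0 0 * M p j + V 0 1 * M q j
      else if i = q then V 1 0 * M p j + V 1 1 * M q j
      else M i j := by
  split_ifs with hp hq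
  · rw [mul_apply, Fintype.sum_eq_add p q hpq (fun k hk => by simp [twoLevel, hp, hk.1, hk.2])]
    simp [twoLevel, hp, hpq.symm]
  · rw [mul_apply, Fintype.sum_eq_add p q hpq (fun k hk => by simp [twoLevel, hq, hk.1, hk.2])]
    simp [twoLevel, hq, hpq.symm]
  · exact mul_apply_of_row_eq_one (fun k => by simp [twoLevel, hp, hq]) M j

theorem twoLevel_mul_twoLevel (hpq : p ≠ q) (V W : Matrix (Fin 2) (Fin 2) R) :
    twoLevel p q V * twoLevel p q W = twoLevel p q (V * W) := by
  ext i j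
  rw [twoLevel_mul_apply hpq]
  simp only [twoLevel, of_apply, one_apply, mul_apply, Fin.sum_univ_two]
  split_ifs <;> grind

end TwoLevel

theorem twoLevel_mem_unitaryGroup [Fintype ι] [CommRing R] [StarRing R] {p q : ι} (hpq : p ≠ q)
    {V : Matrix (Fin 2) (Fin 2) R} (hV : V ∈ unitaryGroup (Fin 2) R) :
    twoLevel p q V ∈ unitaryGroup ι R := by
  rw [mem_unitaryGroup_iff, star_twoLevel, twoLevel_mul_twoLevel hpq, mem_unitaryGroup_iff.1 hV,
    twoLevel_one hpq]

end Matrix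

theorem isTwoLevelOn_iff_mem_identityOutside {ι R : Type*} [Fintype ι] [DecidableEq ι]
    [Semiring R] {A : Matrix ι ι R} {p q : ι} :
    IsTwoLevelOn A p q ↔ A ∈ identityOutside {p, q} := by
  simp [IsTwoLevelOn, mem_identityOutside, one_apply]

theorem exists_givens_rotation {𝕜 : Type*} [RCLike 𝕜] (x y : 𝕜) :
    ∃ V ∈ unitaryGroup (Fin 2) 𝕜, ∃ r : ℝ, 0 ≤ r ∧
      V 0 0 * x + V 0 1 * y = r ∧ V 1 0 * x + V 1 1 * y = 0 := by
  by_cases hxy : x = 0 ∧ y = 0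
  · exact ⟨1, one_mem _, 0, le_rfl, by simp [hxy.1, hxy.2], by simp [hxy.1, hxy.2]⟩
  set r := √(‖x‖ ^ 2 + ‖y‖ ^ 2)
  have hr : 0 < r := Real.sqrt_pos.2 (by
    rcases not_and_or.1 hxy with h | h <;> positivity)
  have hr0 : (r : 𝕜) ≠ 0 := RCLike.ofReal_ne_zero.2 hr.ne'
  have hr2 : x * conj x + y * conj y = (r : 𝕜) ^ 2 := by
    rw [RCLike.mul_conj, RCLike.mul_conj]
    norm_cast
    exact (Real.sq_sqrt (by positivity)).symm
  refine ⟨!![conj x / r, conj y / r; -y / r, x / r], ?_, r, hr.le, ?_, ?_⟩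
  · rw [mem_unitaryGroup_iff]
    ext i j
    fin_cases i <;> fin_cases j <;>
      simp [mul_apply, Fin.sum_univ_two, star_apply] <;> field_simp <;>
      first | linear_combination hr2 | ring
  · simp
    field_simp
    linear_combination hr2
  · simp
    field_simp
    ring

section Decomposition

variable {ι 𝕜 : Type*} [Fintype ι] [DecidableEq ι] [RCLike 𝕜]

theorem IsTwoLevelOn.mul_apply_of_ne {G : Matrix ι ι 𝕜} {p q i : ι} (hG : IsTwoLevelOn G p q)
    (hp : i ≠ p) (hq : i ≠ q) (M : Matrix ι ι 𝕜) (j : ι) : (G * M) i j = M i j :=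
  mul_apply_of_row_eq_one (fun k => hG i k (.inl ⟨hp, hq⟩)) M j

theorem exists_eq_givens_mul {p q : ι} (hpq : p ≠ q) (M : Matrix ι ι 𝕜) (c : ι) :
    ∃ G ∈ unitaryGroup ι 𝕜, IsTwoLevelOn G p q ∧ ∃ M' : Matrix ι ι 𝕜,
      M = G * M' ∧ M' q c = 0 ∧ ∃ r : ℝ, 0 ≤ r ∧ M' p c = r := by
  obtain ⟨V, hV, r, hr, hp, hq⟩ := exists_givens_rotation (M p c) (M q c)
  have hE := twoLevel_mem_unitaryGroup hpq hV
  refine ⟨star (twoLevel p q V), Unitary.star_mem hE, ?_, twoLevel p q V * M, ?_, ?_, r, hr, ?_⟩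
  · rw [star_twoLevel]
    exact isTwoLevelOn_twoLevel _
  · rw [← mul_assoc, mem_unitaryGroup_iff'.1 hE, one_mul]
  · rw [twoLevel_mul_apply hpq, if_neg hpq.symm, if_pos rfl, hq]
  · rw [twoLevel_mul_apply hpq, if_pos rfl, hp]

def IsTwoLevelUnitaryOn (P : Set (ι × ι)) (A : Matrix ι ι 𝕜) : Prop :=
  A ∈ unitaryGroup ι 𝕜 ∧ ∃ p ∈ P, IsTwoLevelOn A p.1 p.2

theorem IsTwoLevelUnitaryOn.mono {P Q : Set (ι × ι)} {A : Matrix ι ι 𝕜}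
    (hA : IsTwoLevelUnitaryOn P A) (hPQ : P ⊆ Q) : IsTwoLevelUnitaryOn Q A :=
  ⟨hA.1, hA.2.imp fun _ h => ⟨hPQ h.1, h.2⟩⟩

theorem IsTwoLevelUnitaryOn.mem_identityOutside {P : Set (ι × ι)} {s : Set ι}
    {A : Matrix ι ι 𝕜} (hA : IsTwoLevelUnitaryOn P A) (hP : ∀ p ∈ P, p.1 ∈ s ∧ p.2 ∈ s) :
    A ∈ identityOutside s := by
  obtain ⟨-, p, hp, hA⟩ := hA
  refine identityOutside_mono ?_ (isTwoLevelOn_iff_mem_identityOutside.1 hA)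
  simp [Set.insert_subset_iff, hP p hp]

theorem exists_eq_list_prod_mul_col_eq_zero (c a b : ι) (l : List ι) (hl : (a :: b :: l).Nodup)
    (M : Matrix ι ι 𝕜) :
    ∃ L : List (Matrix ι ι 𝕜), L.length = l.length + 1 ∧
      (∀ A ∈ L, IsTwoLevelUnitaryOn {p | p ∈ (a :: b :: l).consecutivePairs} A) ∧
      ∃ M' : Matrix ι ι 𝕜, M = L.prod * M' ∧ (∀ i ∈ b :: l, M' i c = 0) ∧
        ∃ r : ℝ, 0 ≤ r ∧ M' a c = r := by
  induction l generalizing a b M with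
  | nil =>
    have hab : a ≠ b := by simpa using hl
    obtain ⟨G, hG, hGab, M', rfl, hb, hr⟩ := exists_eq_givens_mul hab M c
    exact ⟨[G], rfl, by simpa using ⟨hG, (a, b), List.mem_cons_self .., hGab⟩, M', by simp,
      by simpa using hb, hr⟩
  | cons d l ih =>
    have ha := (List.nodup_cons.1 hl).1
    have hb := (List.nodup_cons.1 hl.of_cons).1
    have hab : a ≠ b := fun h => ha (h ▸ List.mem_cons_self ..)
    obtain ⟨L, hLlen, hL, M₁, rfl, hzero, -⟩ := ih b d hl.of_cons M
    obtain ⟨G, hG, hGab, M', rfl, hM'b, hr⟩ := exists_eq_givens_mul hab M₁ c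
    refine ⟨L ++ [G], by simp [hLlen], ?_, M', by simp [mul_assoc], ?_, hr⟩
    · simp only [List.mem_append, List.mem_singleton]
      rintro A (hA | rfl)
      · exact (hL A hA).mono fun p hp => List.mem_cons_of_mem _ hp
      · exact ⟨hG, (a, b), List.mem_cons_self .., hGab⟩
    · intro i hi
      rcases List.mem_cons.1 hi with rfl | hi
      · exact hM'b
      · rw [← hzero i hi, hGab.mul_apply_of_ne ((List.mem_cons_of_mem _ hi).ne_of_notMem ha)
          (hi.ne_of_notMem hb)]

theorem mem_identityOutside_diff_singleton {U : Matrix ι ι 𝕜} {s : Set ι} {a : ι}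
    (hU : U ∈ unitaryGroup ι 𝕜) (hs : U ∈ identityOutside s) (hcol : ∀ i ≠ a, U i a = 0)
    {r : ℝ} (hr : 0 ≤ r) (ha : U a a = r) : U ∈ identityOutside (s \ {a}) := by
  have hrow : ∀ j, (star U * U) a j = star (U a a) * U a j := fun j => by
    rw [mul_apply, Fintype.sum_eq_single a fun i hi => by
      rw [star_apply, hcol i hi, star_zero, zero_mul]]
    rfl
  have hr1 : r = 1 := by
    have h := hrow a
    rw [mem_unitaryGroup_iff'.1 hU, ha, one_apply_eq, RCLike.star_def, RCLike.conj_ofReal] at h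
    norm_cast at h
    nlinarith
  have hcol' : ∀ i, U i a = (1 : Matrix ι ι 𝕜) i a := fun i => by
    rcases eq_or_ne i a with rfl | hi
    · simp [ha, hr1]
    · rw [hcol i hi, one_apply_ne hi]
  have hrow' : ∀ j, U a j = (1 : Matrix ι ι 𝕜) a j := fun j => by
    rw [← mem_unitaryGroup_iff'.1 hU, hrow, ha, hr1]
    simp
  intro i j hij
  simp only [Set.mem_sdiff, Set.mem_singleton_iff, not_and_not_right] at hij
  rcases hij with hi | hj
  · by_cases his : i ∈ s
    · rw [hi his]
      exact hrow' j
    · exact hs i j (.inl his)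
  · by_cases hjs : j ∈ s
    · rw [hj hjs]
      exact hcol' i
    · exact hs i j (.inr hjs)

theorem exists_eq_list_prod_mul_mem_identityOutside (a b : ι) (l : List ι)
    (hl : (a :: b :: l).Nodup) {U : Matrix ι ι 𝕜} (hU : U ∈ unitaryGroup ι 𝕜)
    (hUl : U ∈ identityOutside {i | i ∈ a :: b :: l}) :
    ∃ L : List (Matrix ι ι 𝕜), L.length = l.length + 1 ∧
      (∀ A ∈ L, IsTwoLevelUnitaryOn {p | p ∈ (a :: b :: l).consecutivePairs} A) ∧
      ∃ U' ∈ unitaryGroup ι 𝕜, U' ∈ identityOutside {i | i ∈ b :: l} ∧ U = L.prod * U' := by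
  obtain ⟨L, hLlen, hL, U', hUU', hzero, r, hr, hra⟩ :=
    exists_eq_list_prod_mul_col_eq_zero a a b l hl U
  have hPu : L.prod ∈ unitaryGroup ι 𝕜 := Submonoid.list_prod_mem _ fun A hA => (hL A hA).1
  have hPl : L.prod ∈ identityOutside {i | i ∈ a :: b :: l} :=
    Submonoid.list_prod_mem _ fun A hA =>
      (hL A hA).mem_identityOutside fun _ hp => List.mem_of_mem_consecutivePairs hp
  have hU' : U' = star L.prod * U := by
    rw [hUU', ← mul_assoc, mem_unitaryGroup_iff'.1 hPu, one_mul]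
  have hU'u : U' ∈ unitaryGroup ι 𝕜 := hU' ▸ mul_mem (Unitary.star_mem hPu) hU
  have hU'l : U' ∈ identityOutside {i | i ∈ a :: b :: l} :=
    hU' ▸ mul_mem (star_mem_identityOutside hPl) hUl
  have hcol : ∀ i ≠ a, U' i a = 0 := fun i hi => by
    by_cases hil : i ∈ b :: l
    · exact hzero i hil
    · rw [hU'l i a (.inl fun h => (List.mem_cons.1 h).elim hi hil), one_apply_ne hi]
  refine ⟨L, hLlen, hL, U', hU'u, ?_, hUU'⟩
  refine identityOutside_mono ?_ (mem_identityOutside_diff_singleton hU'u hU'l hcol hr hra)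
  rintro i ⟨hi, hia⟩
  exact (List.mem_cons.1 hi).resolve_left hia

theorem exists_eq_list_prod_of_mem_identityOutside (a b : ι) (l : List ι)
    (hl : (a :: b :: l).Nodup) {U : Matrix ι ι 𝕜} (hU : U ∈ unitaryGroup ι 𝕜)
    (hUl : U ∈ identityOutside {i | i ∈ a :: b :: l}) :
    ∃ L : List (Matrix ι ι 𝕜), L.length ≤ (l.length + 2).choose 2 ∧
      (∀ A ∈ L, IsTwoLevelUnitaryOn {p | p ∈ (a :: b :: l).consecutivePairs} A) ∧
      U = L.prod := by
  induction l generalizing a b U with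
  | nil =>
    refine ⟨[U], by simp, ?_, by simp⟩
    refine fun A hA => ⟨List.eq_of_mem_singleton hA ▸ hU, (a, b), List.mem_cons_self .., ?_⟩
    rw [List.eq_of_mem_singleton hA, isTwoLevelOn_iff_mem_identityOutside]
    exact identityOutside_mono (fun i hi => by simpa using hi) hUl
  | cons d l ih =>
    obtain ⟨L₁, hL₁len, hL₁, U', hU'u, hU'l, rfl⟩ :=
      exists_eq_list_prod_mul_mem_identityOutside a b (d :: l) hl hU hUl
    obtain ⟨L₂, hL₂len, hL₂, rfl⟩ := ih b d hl.of_cons hU'u hU'l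
    refine ⟨L₁ ++ L₂, ?_, ?_, by simp⟩
    · rw [List.length_append, hL₁len, List.length_cons, Nat.choose_succ_succ',
        Nat.choose_one_right]
      exact Nat.add_le_add_left hL₂len _
    · simp only [List.mem_append]
      rintro A (hA | hA)
      · exact hL₁ A hA
      · exact (hL₂ A hA).mono fun p hp => List.mem_cons_of_mem _ hp

theorem exists_eq_list_prod_of_forall_mem (l : List ι) (hnd : l.Nodup) (hl : ∀ i, i ∈ l)
    (hlen : 2 ≤ l.length) {U : Matrix ι ι 𝕜} (hU : U ∈ unitaryGroup ι 𝕜) :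
    ∃ L : List (Matrix ι ι 𝕜), L.length ≤ l.length.choose 2 ∧
      (∀ A ∈ L, IsTwoLevelUnitaryOn {p | p ∈ l.consecutivePairs} A) ∧ U = L.prod :=
  match l, hlen with
  | a :: b :: l, _ => exists_eq_list_prod_of_mem_identityOutside a b l hnd hU
      fun i j hij => (hij.elim (· (hl i)) (· (hl j))).elim

end Decomposition

theorem differsInOnePos_comm {n : ℕ} {x y : Fin n → Bool} :
    DiffersInOnePos x y ↔ DiffersInOnePos y x := by
  simp only [DiffersInOnePos, ne_comm]

theorem differsInOnePos_cons_cons {n : ℕ} (b : Bool) (x y : Fin n → Bool) :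
    DiffersInOnePos (Fin.cons b x : Fin (n + 1) → Bool) (Fin.cons b y) ↔
      DiffersInOnePos x y := by
  simp [DiffersInOnePos, Finset.card_filter, Fin.sum_univ_succ]

theorem differsInOnePos_cons_false_true {n : ℕ} (x : Fin n → Bool) :
    DiffersInOnePos (Fin.cons false x : Fin (n + 1) → Bool) (Fin.cons true x) := by
  simp [DiffersInOnePos, Finset.card_filter, Fin.sum_univ_succ]

def grayCode : (n : ℕ) → List (Fin n → Bool)
  | 0 => [Fin.elim0]
  | n + 1 => (grayCode n).map (Fin.cons false) ++ ((grayCode n).map (Fin.cons true)).reverse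

theorem length_grayCode (n : ℕ) : (grayCode n).length = 2 ^ n := by
  induction n with
  | zero => rfl
  | succ n ih => simp [grayCode, ih, pow_succ, mul_two]

theorem mem_grayCode {n : ℕ} (x : Fin n → Bool) : x ∈ grayCode n := by
  induction n with
  | zero => simp [grayCode, Subsingleton.elim x Fin.elim0]
  | succ n ih =>
    rw [← Fin.cons_self_tail x]
    cases x 0 <;> simp [grayCode, ih]

theorem nodup_grayCode (n : ℕ) : (grayCode n).Nodup := by
  induction n with
  | zero => simp [grayCode]
  | succ n ih =>
    simp only [grayCode, List.nodup_append, List.nodup_reverse, List.mem_reverse, List.mem_map]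
    refine ⟨ih.map (Fin.cons_right_injective _), ih.map (Fin.cons_right_injective _), ?_⟩
    rintro _ ⟨x, -, rfl⟩ _ ⟨y, -, rfl⟩ h
    simpa using congr_fun h 0

theorem isChain_grayCode (n : ℕ) : (grayCode n).IsChain DiffersInOnePos := by
  induction n with
  | zero => simp [grayCode]
  | succ n ih =>
    rw [grayCode, List.isChain_append, List.isChain_map, List.isChain_reverse, List.isChain_map]
    refine ⟨ih.imp fun _ _ h => (differsInOnePos_cons_cons _ _ _).2 h,
      ih.imp fun _ _ h => (differsInOnePos_cons_cons _ _ _).2 (differsInOnePos_comm.1 h), ?_⟩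
    simp only [List.head?_reverse, List.getLast?_map, Option.mem_def, Option.map_eq_some_iff]
    rintro _ ⟨x, hx, rfl⟩ _ ⟨y, hy, rfl⟩
    cases hx.symm.trans hy
    exact differsInOnePos_cons_false_true x

theorem Nat.choose_two_two_pow {n : ℕ} (hn : 1 ≤ n) :
    (2 ^ n).choose 2 = 2 ^ (n - 1) * (2 ^ n - 1) := by
  obtain ⟨k, rfl⟩ := Nat.exists_eq_add_of_le' hn
  rw [Nat.choose_two_right, Nat.add_sub_cancel]
  exact Nat.div_eq_of_eq_mul_left two_pos (by rw [pow_succ]; ring)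

/-- Every quantum gate on an `n`-qubit register (a `2^n × 2^n` unitary matrix,
rows and columns indexed by length-`n` binary strings) is a product of at most
`2^(n-1)(2^n - 1)` fully controlled single-qubit gates: two-level unitary
matrices supported on pairs of binary strings differing in exactly one
coordinate, the pairs coming from a fixed set of `2^n - 1` pairs. -/
theorem quantum_gate_eq_prod_fully_controlled (n : ℕ) (hn : 1 ≤ n)
    (U : Matrix (Fin n → Bool) (Fin n → Bool) ℂ)
    (hU : U ∈ Matrix.unitaryGroup (Fin n → Bool) ℂ) :
    ∃ S : Finset ((Fin n → Bool) × (Fin n → Bool)),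
      S.card = 2 ^ n - 1 ∧
      (∀ p ∈ S, DiffersInOnePos p.1 p.2) ∧
      ∃ (m : ℕ) (_ : m ≤ 2 ^ (n - 1) * (2 ^ n - 1))
        (A : Fin m → Matrix (Fin n → Bool) (Fin n → Bool) ℂ),
        U = (List.ofFn A).prod ∧
        ∀ i, A i ∈ Matrix.unitaryGroup (Fin n → Bool) ℂ ∧
          ∃ p ∈ S, IsTwoLevelOn (A i) p.1 p.2 := by
  obtain ⟨L, hLlen, hL, rfl⟩ := exists_eq_list_prod_of_forall_mem (grayCode n)
    (nodup_grayCode n) mem_grayCode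
    (by rw [length_grayCode]; exact Nat.le_self_pow (by omega) 2) hU
  refine ⟨(grayCode n).consecutivePairs.toFinset, ?_, ?_, L.length, ?_, L.get,
    by rw [List.ofFn_get], fun i => ?_⟩
  · rw [List.toFinset_card_of_nodup (nodup_grayCode n).consecutivePairs,
      List.length_consecutivePairs, length_grayCode]
  · exact fun p hp => (isChain_grayCode n).rel_of_mem_consecutivePairs (List.mem_toFinset.1 hp)
  · rwa [← Nat.choose_two_two_pow hn, ← length_grayCode]
  · obtain ⟨hu, p, hp, hA⟩ := hL _ (List.get_mem L i)
    exact ⟨hu, p, List.mem_toFinset.2 hp, hA⟩
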